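/- For any transversely isotropic fourth-order harmonic tensor H (i.e. H = g⋆H₀ for some g ∈ SO(3), where H₀ is the normal form with parameter δ ≠ 0), one has J₂(H) ≠ 0, J₃(H) ≠ 0, and H = (63/25)·(1/J₃(H))·d₂′(H) ∗ d₂′(H), where d₂(H) = tr₁₃(H²), d₂′ is its deviatoric part, J₃ = tr(tr₁₃(H³)), and ∗ is the harmonic product. -/
import Mathlib


open Matrix

/-- Fourth order tensors on `ℝ³` (by components). -/
abbrev Tens4 := Fin 3 → Fin 3 → Fin 3 → Fin 3 → ℝ

/-- The action of a rotation `g` on a fourth order tensor: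
`(g ⋆ H)_{ijkl} = g_{ip} g_{jq} g_{kr} g_{ls} H_{pqrs}`. -/
def rotAct (g : Matrix (Fin 3) (Fin 3) ℝ) (H : Tens4) : Tens4 :=
  fun i j k l => ∑ p : Fin 3, ∑ q : Fin 3, ∑ r : Fin 3, ∑ s : Fin 3,
    g i p * g j q * g k r * g l s * H p q r s

/-- The fourth order tensor `(H²)_{ijkl} = H_{ijpq} H_{pqkl}`. -/
def tensSq (H : Tens4) : Tens4 :=
  fun i j k l => ∑ p : Fin 3, ∑ q : Fin 3, H i j p q * H p q k l

/-- The fourth order tensor `(H³)_{ijkl} = (H²)_{ijpq} H_{pqkl}`. -/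
def tensCube (H : Tens4) : Tens4 :=
  fun i j k l => ∑ p : Fin 3, ∑ q : Fin 3, tensSq H i j p q * H p q k l

/-- The second order covariant `d₂ = tr₁₃ H²`. -/
def d2 (H : Tens4) : Matrix (Fin 3) (Fin 3) ℝ :=
  Matrix.of fun j l => ∑ p : Fin 3, tensSq H p j p l

/-- The second order covariant `d₃ = tr₁₃ H³`. -/
def d3 (H : Tens4) : Matrix (Fin 3) (Fin 3) ℝ :=
  Matrix.of fun j l => ∑ p : Fin 3, tensCube H p j p l

/-- The invariant `J₂ = tr d₂`. -/
def J2 (H : Tens4) : ℝ := (d2 H).trace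

/-- The invariant `J₃ = tr d₃`. -/
def J3 (H : Tens4) : ℝ := (d3 H).trace

/-- Deviatoric part of a second order tensor. -/
noncomputable def dev (a : Matrix (Fin 3) (Fin 3) ℝ) : Matrix (Fin 3) (Fin 3) ℝ :=
  a - (a.trace / 3) • (1 : Matrix (Fin 3) (Fin 3) ℝ)

/-- The totally symmetric tensor product `a ⊙ b` of two symmetric second order tensors. -/
noncomputable def sym4 (a b : Matrix (Fin 3) (Fin 3) ℝ) : Tens4 :=
  fun i j k l => (1 / 6) * (a i j * b k l + b i j * a k l + a i k * b j l +
    b i k * a j l + a i l * b j k + b i l * a j k)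

/-- The harmonic product `a ∗ b` of two second order harmonic (symmetric traceless)
tensors, a fourth order harmonic tensor:
`a ∗ b = a ⊙ b − (2/7) Id ⊙ (ab + ba) + (2/35) tr(ab) Id ⊙ Id`. -/
noncomputable def hprod2 (a b : Matrix (Fin 3) (Fin 3) ℝ) : Tens4 :=
  fun i j k l => sym4 a b i j k l - (2 / 7) * sym4 1 (a * b + b * a) i j k l +
    (2 / 35) * (a * b).trace * sym4 1 1 i j k l

/-- The transversely isotropic normal form `H₀(δ)` of a fourth order harmonic tensor
(axis `Oz`), with Kelvin matrix entries `H₀₁₁₁₁ = 3δ`, `H₀₁₁₂₂ = δ`, `H₀₁₁₃₃ = −4δ`,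
`H₀₃₃₃₃ = 8δ`, etc. -/
noncomputable def H0TI (δ : ℝ) : Tens4 := fun i j k l =>
  let m : Fin 3 → ℕ := fun q => [i, j, k, l].count q
  δ * (if m 0 = 4 ∨ m 1 = 4 then 3
    else if m 2 = 4 then 8
    else if m 0 = 2 ∧ m 1 = 2 then 1
    else if m 2 = 2 ∧ (m 0 = 2 ∨ m 1 = 2) then -4
    else 0)

/-! ### Auxiliary machinery -/

section Aux

set_option maxHeartbeats 1600000

/-- The normal form divided by `δ`, as an explicit table. -/
def c4 : Fin 3 → Fin 3 → Fin 3 → Fin 3 → ℝ :=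
  ![![![![(3 : ℝ), (0 : ℝ), (0 : ℝ)], ![(0 : ℝ), (1 : ℝ), (0 : ℝ)], ![(0 : ℝ), (0 : ℝ), (-4 : ℝ)]], ![![(0 : ℝ), (1 : ℝ), (0 : ℝ)], ![(1 : ℝ), (0 : ℝ), (0 : ℝ)], ![(0 : ℝ), (0 : ℝ), (0 : ℝ)]], ![![(0 : ℝ), (0 : ℝ), (-4 : ℝ)], ![(0 : ℝ), (0 : ℝ), (0 : ℝ)], ![(-4 : ℝ), (0 : ℝ), (0 : ℝ)]]], ![![![(0 : ℝ), (1 : ℝ), (0 : ℝ)], ![(1 : ℝ), (0 : ℝ), (0 : ℝ)], ![(0 : ℝ), (0 : ℝ), (0 : ℝ)]], ![![(1 : ℝ), (0 : ℝ), (0 : ℝ)], ![(0 : ℝ), (3 : ℝ), (0 : ℝ)], ![(0 : ℝ), (0 : ℝ), (-4 : ℝ)]], ![![(0 : ℝ), (0 : ℝ), (0 : ℝ)], ![(0 : ℝ), (0 : ℝ), (-4 : ℝ)], ![(0 : ℝ), (-4 : ℝ), (0 : ℝ)]]], ![![![(0 : ℝ), (0 : ℝ), (-4 : ℝ)], ![(0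 : ℝ), (0 : ℝ), (0 : ℝ)], ![(-4 : ℝ), (0 : ℝ), (0 : ℝ)]], ![![(0 : ℝ), (0 : ℝ), (0 : ℝ)], ![(0 : ℝ), (0 : ℝ), (-4 : ℝ)], ![(0 : ℝ), (-4 : ℝ), (0 : ℝ)]], ![![(-4 : ℝ), (0 : ℝ), (0 : ℝ)], ![(0 : ℝ), (-4 : ℝ), (0 : ℝ)], ![(0 : ℝ), (0 : ℝ), (8 : ℝ)]]]]

noncomputable def H0d (δ : ℝ) : Tens4 := fun i j k l => δ * c4 i j k l

lemma H0TI_eq (δ : ℝ) : H0TI δ = H0d δ := by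
  funext i j k l
  fin_cases i <;> fin_cases j <;> fin_cases k <;> fin_cases l <;>
    norm_num (config := { decide := true }) [H0TI, H0d, c4, List.count_cons, List.count_nil]

lemma d2_H0 (δ : ℝ) : d2 (H0d δ) =
    Matrix.of ![![60*δ^2,0,0], ![0,60*δ^2,0], ![0,0,160*δ^2]] := by
  ext i j
  fin_cases i <;> fin_cases j <;>
    simp [d2, tensSq, H0d, Fin.sum_univ_three, c4, Matrix.vecHead, Matrix.vecTail] <;> ring

lemma J2_H0 (δ : ℝ) : J2 (H0d δ) = 280 * δ^2 := by
  rw [J2, d2_H0]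
  simp [Matrix.trace, Fin.sum_univ_three, Matrix.vecHead, Matrix.vecTail]
  ring

lemma J3_H0 (δ : ℝ) : J3 (H0d δ) = 720 * δ^3 := by
  simp [J3, d3, tensCube, tensSq, H0d, Matrix.trace, Fin.sum_univ_three, c4,
    Matrix.vecHead, Matrix.vecTail]
  ring

noncomputable def ddf (δ : ℝ) : Fin 3 → Fin 3 → ℝ :=
  ![![-100/3*δ^2,0,0], ![0,-100/3*δ^2,0], ![0,0,200/3*δ^2]]

lemma dev_d2_H0 (δ : ℝ) : dev (d2 (H0d δ)) = Matrix.of (ddf δ) := by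
  rw [d2_H0]
  ext i j
  fin_cases i <;> fin_cases j <;>
    simp [dev, ddf, Matrix.trace, Fin.sum_univ_three, Matrix.one_apply,
      Matrix.vecHead, Matrix.vecTail] <;> ring

noncomputable def mmf (δ : ℝ) : Fin 3 → Fin 3 → ℝ :=
  ![![10000/9*δ^4,0,0], ![0,10000/9*δ^4,0], ![0,0,40000/9*δ^4]]

lemma DDmul (δ : ℝ) : Matrix.of (ddf δ) * Matrix.of (ddf δ) = Matrix.of (mmf δ) := by
  ext i j
  fin_cases i <;> fin_cases j <;>
    simp [ddf, mmf, Matrix.mul_apply, Fin.sum_univ_three, Matrix.vecHead, Matrix.vecTail] <;>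
      ring

lemma DDtr (δ : ℝ) : (Matrix.of (ddf δ) * Matrix.of (ddf δ)).trace = 20000/3*δ^4 := by
  rw [DDmul]
  simp [Matrix.trace, Fin.sum_univ_three, mmf, Matrix.vecHead, Matrix.vecTail]
  ring

lemma one3 : (1 : Matrix (Fin 3) (Fin 3) ℝ) = Matrix.of ![![1,0,0],![0,1,0],![0,0,1]] := by
  ext i j
  fin_cases i <;> fin_cases j <;>
    simp [Matrix.one_apply, Matrix.vecHead, Matrix.vecTail]

lemma hp_H0 (δ : ℝ) : hprod2 (Matrix.of (ddf δ)) (Matrix.of (ddf δ)) =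
    fun i j k l => 2000/7 * δ^4 * c4 i j k l := by
  funext i j k l
  simp only [hprod2, DDmul, DDtr, sym4, one3, Matrix.add_apply, Matrix.of_apply]
  fin_cases i <;> fin_cases j <;> fin_cases k <;> fin_cases l <;>
    · norm_num [ddf, mmf, c4, Matrix.vecHead, Matrix.vecTail]
      try ring

/-! Equivariance lemmas -/

lemma frob (A B : Matrix (Fin 3) (Fin 3) ℝ) :
    (∑ p : Fin 3, ∑ q : Fin 3, A p q * B p q) = (A * Bᵀ).trace := by
  simp [Matrix.trace, Matrix.mul_apply, Matrix.diag]

lemma trace_conj {g : Matrix (Fin 3) (Fin 3) ℝ} (hg' : gᵀ * g = 1)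
    (X : Matrix (Fin 3) (Fin 3) ℝ) : (g * X * gᵀ).trace = X.trace := by
  rw [Matrix.trace_mul_comm, ← Matrix.mul_assoc, hg', Matrix.one_mul]

lemma conj_contract {g : Matrix (Fin 3) (Fin 3) ℝ} (hg' : gᵀ * g = 1)
    (M N : Matrix (Fin 3) (Fin 3) ℝ) :
    (∑ p : Fin 3, ∑ q : Fin 3, (g * M * gᵀ) p q * (g * N * gᵀ) p q)
      = ∑ p : Fin 3, ∑ q : Fin 3, M p q * N p q := by
  rw [frob, frob]
  have : (g * M * gᵀ) * (g * N * gᵀ)ᵀ = g * (M * Nᵀ) * gᵀ := by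
    rw [Matrix.transpose_mul, Matrix.transpose_mul, Matrix.transpose_transpose]
    calc g * M * gᵀ * (gᵀᵀ * (Nᵀ * gᵀ)) = g * M * (gᵀ * g) * (Nᵀ * gᵀ) := by
          rw [Matrix.transpose_transpose]; noncomm_ring
      _ = g * (M * Nᵀ) * gᵀ := by rw [hg']; noncomm_ring
  rw [this, trace_conj hg']

lemma rot2_apply (g M : Matrix (Fin 3) (Fin 3) ℝ) (p q : Fin 3) :
    (g * M * gᵀ) p q = ∑ c : Fin 3, ∑ d : Fin 3, g p c * g q d * M c d := by
  simp [Matrix.mul_apply, Matrix.transpose_apply, Fin.sum_univ_three]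
  ring

lemma swap36 (X Z : Fin 3 → Fin 3 → ℝ) (F : Fin 3 → Fin 3 → Fin 3 → Fin 3 → ℝ) :
    (∑ p : Fin 3, ∑ q : Fin 3, (∑ a : Fin 3, ∑ b : Fin 3, X a b * F a b p q) * Z p q)
      = ∑ a : Fin 3, ∑ b : Fin 3, X a b * (∑ p : Fin 3, ∑ q : Fin 3, F a b p q * Z p q) := by
  simp [Fin.sum_univ_three]; ring

lemma rotAct_pair {g : Matrix (Fin 3) (Fin 3) ℝ} (hg' : gᵀ * g = 1) (A B : Tens4) :
    (fun i j k l => ∑ p : Fin 3, ∑ q : Fin 3, rotAct g A i j p q * rotAct g B p q k l)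
      = rotAct g (fun i j k l => ∑ p : Fin 3, ∑ q : Fin 3, A i j p q * B p q k l) := by
  funext i j k l
  set N : Matrix (Fin 3) (Fin 3) ℝ :=
    Matrix.of (fun e f => ∑ c : Fin 3, ∑ d : Fin 3, g k c * g l d * B e f c d) with hN
  have e1 : ∀ p q : Fin 3, rotAct g A i j p q
      = ∑ a : Fin 3, ∑ b : Fin 3, g i a * g j b *
          (g * Matrix.of (fun c d => A a b c d) * gᵀ) p q := by
    intro p q
    simp [rotAct, rot2_apply, Fin.sum_univ_three]
    ring
  have e2 : ∀ p q : Fin 3, rotAct g B p q k l = (g * N * gᵀ) p q := by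
    intro p q
    simp [rotAct, rot2_apply, hN, Fin.sum_univ_three]
    ring
  calc (∑ p : Fin 3, ∑ q : Fin 3, rotAct g A i j p q * rotAct g B p q k l)
      = ∑ p : Fin 3, ∑ q : Fin 3,
          (∑ a : Fin 3, ∑ b : Fin 3, g i a * g j b *
            (g * Matrix.of (fun c d => A a b c d) * gᵀ) p q) * (g * N * gᵀ) p q := by
        simp only [e1, e2]
    _ = ∑ a : Fin 3, ∑ b : Fin 3, (g i a * g j b) *
          (∑ p : Fin 3, ∑ q : Fin 3,
            (g * Matrix.of (fun c d => A a b c d) * gᵀ) p q * (g * N * gᵀ) p q) := by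
        exact swap36 (fun a b => g i a * g j b)
          (fun p q => (g * N * gᵀ) p q)
          (fun a b p q => (g * Matrix.of (fun c d => A a b c d) * gᵀ) p q)
    _ = ∑ a : Fin 3, ∑ b : Fin 3, (g i a * g j b) *
          (∑ p : Fin 3, ∑ q : Fin 3, A a b p q * N p q) := by
        refine Finset.sum_congr rfl fun a _ => Finset.sum_congr rfl fun b _ => ?_
        rw [conj_contract hg']
        simp
    _ = rotAct g (fun i j k l => ∑ p : Fin 3, ∑ q : Fin 3, A i j p q * B p q k l) i j k l := by
        simp [rotAct, hN, Fin.sum_univ_three]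
        ring

lemma swap13 (X : Fin 3 → Fin 3 → ℝ) (F : Fin 3 → Fin 3 → Fin 3 → ℝ) :
    (∑ p : Fin 3, ∑ b : Fin 3, ∑ d : Fin 3, X b d * F b d p)
      = ∑ b : Fin 3, ∑ d : Fin 3, X b d * (∑ p : Fin 3, F b d p) := by
  simp [Fin.sum_univ_three]; ring

lemma tr13_rot {g : Matrix (Fin 3) (Fin 3) ℝ} (hg' : gᵀ * g = 1) (A : Tens4) :
    Matrix.of (fun j l => ∑ p : Fin 3, rotAct g A p j p l)
      = g * Matrix.of (fun j l => ∑ p : Fin 3, A p j p l) * gᵀ := by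
  ext j l
  have e1 : ∀ p : Fin 3, rotAct g A p j p l
      = ∑ b : Fin 3, ∑ d : Fin 3, (g j b * g l d) *
          ((g * Matrix.of (fun a c => A a b c d) * gᵀ) p p) := by
    intro p
    simp [rotAct, rot2_apply, Fin.sum_univ_three]
    ring
  calc (Matrix.of (fun j l => ∑ p : Fin 3, rotAct g A p j p l)) j l
      = ∑ p : Fin 3, ∑ b : Fin 3, ∑ d : Fin 3, (g j b * g l d) *
          ((g * Matrix.of (fun a c => A a b c d) * gᵀ) p p) := by
        simp only [Matrix.of_apply, e1]
    _ = ∑ b : Fin 3, ∑ d : Fin 3, (g j b * g l d) *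
          (∑ p : Fin 3, (g * Matrix.of (fun a c => A a b c d) * gᵀ) p p) := by
        exact swap13 _ _
    _ = ∑ b : Fin 3, ∑ d : Fin 3, (g j b * g l d) * (∑ a : Fin 3, A a b a d) := by
        refine Finset.sum_congr rfl fun b _ => Finset.sum_congr rfl fun d _ => ?_
        have : (∑ p : Fin 3, (g * Matrix.of (fun a c => A a b c d) * gᵀ) p p)
            = (g * Matrix.of (fun a c => A a b c d) * gᵀ).trace := by
          simp [Matrix.trace, Matrix.diag]
        rw [this, trace_conj hg']
        simp [Matrix.trace, Matrix.diag]
    _ = (g * Matrix.of (fun j l => ∑ p : Fin 3, A p j p l) * gᵀ) j l := by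
        rw [rot2_apply]
        simp

lemma dev_rot {g : Matrix (Fin 3) (Fin 3) ℝ} (hg1 : g * gᵀ = 1)
    (a : Matrix (Fin 3) (Fin 3) ℝ) (hg' : gᵀ * g = 1) :
    dev (g * a * gᵀ) = g * dev a * gᵀ := by
  unfold dev
  rw [trace_conj hg']
  rw [Matrix.mul_sub, Matrix.sub_mul]
  congr 1
  rw [Matrix.mul_smul, Matrix.smul_mul, Matrix.mul_one, hg1]

lemma sym4_rot (g : Matrix (Fin 3) (Fin 3) ℝ) (a b : Matrix (Fin 3) (Fin 3) ℝ) :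
    sym4 (g * a * gᵀ) (g * b * gᵀ) = rotAct g (sym4 a b) := by
  funext i j k l
  simp only [sym4, rotAct, rot2_apply]
  simp [Fin.sum_univ_three]
  ring

lemma conjMul {g : Matrix (Fin 3) (Fin 3) ℝ} (hg' : gᵀ * g = 1)
    (a b : Matrix (Fin 3) (Fin 3) ℝ) :
    (g * a * gᵀ) * (g * b * gᵀ) = g * (a * b) * gᵀ := by
  calc (g * a * gᵀ) * (g * b * gᵀ) = g * a * (gᵀ * g) * (b * gᵀ) := by noncomm_ring
    _ = g * (a * b) * gᵀ := by rw [hg']; noncomm_ring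

lemma hprod2_rot {g : Matrix (Fin 3) (Fin 3) ℝ} (hg1 : g * gᵀ = 1) (hg' : gᵀ * g = 1)
    (a b : Matrix (Fin 3) (Fin 3) ℝ) :
    hprod2 (g * a * gᵀ) (g * b * gᵀ) = rotAct g (hprod2 a b) := by
  have h1g : (1 : Matrix (Fin 3) (Fin 3) ℝ) = g * 1 * gᵀ := by
    rw [Matrix.mul_one, hg1]
  have hsum : (g * a * gᵀ) * (g * b * gᵀ) + (g * b * gᵀ) * (g * a * gᵀ)
      = g * (a * b + b * a) * gᵀ := by
    rw [conjMul hg', conjMul hg', Matrix.mul_add, Matrix.add_mul]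
  funext i j k l
  have e1 : sym4 (g * a * gᵀ) (g * b * gᵀ) i j k l = rotAct g (sym4 a b) i j k l := by
    rw [sym4_rot]
  have e2 : sym4 1 ((g * a * gᵀ) * (g * b * gᵀ) + (g * b * gᵀ) * (g * a * gᵀ)) i j k l
      = rotAct g (sym4 1 (a * b + b * a)) i j k l := by
    rw [hsum]
    conv_lhs => rw [h1g]
    rw [sym4_rot]
  have e3 : sym4 (1 : Matrix (Fin 3) (Fin 3) ℝ) 1 i j k l = rotAct g (sym4 1 1) i j k l := by
    conv_lhs => rw [h1g]
    rw [sym4_rot]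
  have e4 : ((g * a * gᵀ) * (g * b * gᵀ)).trace = (a * b).trace := by
    rw [conjMul hg', trace_conj hg']
  simp only [hprod2, e1, e2, e3, e4, rotAct]
  simp [Fin.sum_univ_three]
  ring

lemma rotAct_smul (g : Matrix (Fin 3) (Fin 3) ℝ) (c : ℝ) (T : Tens4) (i j k l : Fin 3) :
    rotAct g (fun a b u v => c * T a b u v) i j k l = c * rotAct g T i j k l := by
  simp [rotAct, Fin.sum_univ_three]
  ring

end Aux


/-- **Reconstruction of transversely isotropic fourth order harmonic tensors**:
if `H = g ⋆ H₀(δ)` for some rotation `g` and some `δ ≠ 0`, then `J₂(H) ≠ 0`, `J₃(H) ≠ 0`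
and `H = (63/25) (1/J₃(H)) d₂′(H) ∗ d₂′(H)`. -/
theorem transversely_isotropic_reconstruction (H : Tens4)
    (g : Matrix (Fin 3) (Fin 3) ℝ) (hg1 : g * gᵀ = 1) (hg2 : g.det = 1)
    (δ : ℝ) (hδ : δ ≠ 0) (hH : H = rotAct g (H0TI δ)) :
    J2 H ≠ 0 ∧ J3 H ≠ 0 ∧
      H = fun i j k l =>
        (63 / 25) * (1 / J3 H) * hprod2 (dev (d2 H)) (dev (d2 H)) i j k l := by
  have hg' : gᵀ * g = 1 := mul_eq_one_comm.mp hg1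
  have hH' : H = rotAct g (H0d δ) := by rw [hH, H0TI_eq]
  have hSq : tensSq H = rotAct g (tensSq (H0d δ)) := by
    rw [hH']
    exact rotAct_pair hg' (H0d δ) (H0d δ)
  have hCube : tensCube H = rotAct g (tensCube (H0d δ)) := by
    have h1 : tensCube H = fun i j k l => ∑ p : Fin 3, ∑ q : Fin 3,
        rotAct g (tensSq (H0d δ)) i j p q * rotAct g (H0d δ) p q k l := by
      funext i j k l
      simp only [tensCube]
      refine Finset.sum_congr rfl fun p _ => Finset.sum_congr rfl fun q _ => ?_
      rw [hSq, hH']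
    rw [h1]
    exact rotAct_pair hg' (tensSq (H0d δ)) (H0d δ)
  have hd2 : d2 H = g * d2 (H0d δ) * gᵀ := by
    have h1 : d2 H = Matrix.of (fun j l => ∑ p : Fin 3, rotAct g (tensSq (H0d δ)) p j p l) := by
      unfold d2
      congr 1
      funext j l
      refine Finset.sum_congr rfl fun p _ => ?_
      rw [hSq]
    rw [h1, tr13_rot hg']
    rfl
  have hd3 : d3 H = g * d3 (H0d δ) * gᵀ := by
    have h1 : d3 H = Matrix.of (fun j l => ∑ p : Fin 3, rotAct g (tensCube (H0d δ)) p j p l) := by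
      unfold d3
      congr 1
      funext j l
      refine Finset.sum_congr rfl fun p _ => ?_
      rw [hCube]
    rw [h1, tr13_rot hg']
    rfl
  have hJ2 : J2 H = 280 * δ^2 := by
    rw [J2, hd2, trace_conj hg']
    exact J2_H0 δ
  have hJ3 : J3 H = 720 * δ^3 := by
    rw [J3, hd3, trace_conj hg']
    exact J3_H0 δ
  have hdev : dev (d2 H) = g * Matrix.of (ddf δ) * gᵀ := by
    rw [hd2, dev_rot hg1 _ hg', dev_d2_H0]
  have hhp : hprod2 (dev (d2 H)) (dev (d2 H))
      = rotAct g (fun i j k l => 2000/7 * δ^4 * c4 i j k l) := by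
    rw [hdev, hprod2_rot hg1 hg', hp_H0]
  refine ⟨?_, ?_, ?_⟩
  · rw [hJ2]
    exact mul_ne_zero (by norm_num) (pow_ne_zero 2 hδ)
  · rw [hJ3]
    exact mul_ne_zero (by norm_num) (pow_ne_zero 3 hδ)
  · rw [hJ3, hhp, hH']
    funext i j k l
    have hl : rotAct g (H0d δ) i j k l = δ * rotAct g c4 i j k l :=
      rotAct_smul g δ c4 i j k l
    have hr : rotAct g (fun a b u v => 2000/7 * δ^4 * c4 a b u v) i j k l
        = 2000/7 * δ^4 * rotAct g c4 i j k l := rotAct_smul g _ c4 i j k l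
    rw [hl, hr]
    field_simp
    ring
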